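/- Let s1, u1, w1, u2, w2, y2 be words over B and t1, x2, v nonempty words such that v is primitive, |t1| = |x2|, and for all i, j ∈ ℕ, s1·t1^j·u1·v^i·w1 = u2·v^i·w2·x2^j·y2. Then there exist contexts f1, f2 such that for all i ≥ 1 and j ≥ 1 there exists k ∈ ℕ with t1^j·u1·v^i = f1[v^k] and v^i·w2·x2^j = f2[v^k]. -/

import Mathlib

/-- `wpow x n` is the word `x` repeated `n` times (`x^n`). -/
def wpow {B : Type*} (x : List B) : ℕ → List B
  | 0 => []
  | n + 1 => x ++ wpow x n

/-- Length of a longest common factor (infix) of `u` and `v`. -/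
noncomputable def lcfLen {B : Type*} (u v : List B) : ℕ :=
  sSup {n | ∃ w : List B, w.length = n ∧ w <:+: u ∧ w <:+: v}

/-- The factor distance `dist_f(u,v) = |u| + |v| - 2·|lcf(u,v)|`. -/
noncomputable def distf {B : Type*} (u v : List B) : ℕ :=
  u.length + v.length - 2 * lcfLen u v

/-- A context is a pair of words; `capp c w = c.1 ++ w ++ c.2` is `c[w]`. -/
def capp {B : Type*} (c : List B × List B) (w : List B) : List B :=
  c.1 ++ w ++ c.2

/-- The length `|c|` of a context. -/
def clen {B : Type*} (c : List B × List B) : ℕ :=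
  c.1.length + c.2.length

/-- Product of contexts: `(c·d)[w] = c[d[w]]`. -/
def cmul {B : Type*} (c d : List B × List B) : List B × List B :=
  (c.1 ++ d.1, d.2 ++ c.2)

/-- Power of a context: `c^n[w] = l^n ++ w ++ r^n`. -/
def cpow {B : Type*} (c : List B × List B) (n : ℕ) : List B × List B :=
  (wpow c.1 n, wpow c.2 n)

/-- A nonempty word `x` is primitive if `x = y^p` with `p ≥ 1` implies `p = 1`. -/
def Primitive {B : Type*} (x : List B) : Prop :=
  x ≠ [] ∧ ∀ (y : List B) (p : ℕ), 1 ≤ p → x = wpow y p → p = 1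

/-- Words `x` and `y` are conjugate. -/
def Conj {B : Type*} (x y : List B) : Prop :=
  ∃ t1 t2 : List B, x = t1 ++ t2 ∧ y = t2 ++ t1

/-- The triple of contexts `(c, d, e)` is `x`-commuting: there is a context `f`
such that for every `i ≥ 1` there is `k` with `(e^i·d·c)[ε] = f[x^k]`. -/
def XCommuting {B : Type*} (c d e : List B × List B) (x : List B) : Prop :=
  ∃ f : List B × List B, ∀ i : ℕ, 1 ≤ i → ∃ k : ℕ,
    capp (cmul (cpow e i) (cmul d c)) [] = capp f (wpow x k)

/-!
Take `t1 ≠ []` (otherwise `e = 0` below). For `j ≥ |u2|` the word `s1 t1^j u1` is at least as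
long as `u2`, and `s1 t1^j u1 v^i` begins with `u2 v^i` for every `i`; since `v` is primitive
this forces `s1 t1^j u1 = u2 v^m`. Comparing `j` and `j + 1` gives `t1 u1 = u1 v^e`, and the
same argument on reversed words gives `w2 x2 = v^e' w2`, with `e = e'` because `|t1| = |x2|`.
Hence `t1^j u1 v^i = u1 v^(ej+i)` and `v^i w2 x2^j = v^(i+ej) w2`.
-/

section Words

variable {B : Type*}

theorem wpow_add (x : List B) (m n : ℕ) : wpow x (m + n) = wpow x m ++ wpow x n := by
  induction m with
  | zero => simp [wpow]
  | succ m ih => simp [Nat.succ_add, wpow, ih]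

theorem wpow_succ' (x : List B) (n : ℕ) : wpow x (n + 1) = wpow x n ++ x := by
  simpa [wpow] using wpow_add x n 1

theorem wpow_mul (x : List B) (m n : ℕ) : wpow x (m * n) = wpow (wpow x m) n := by
  induction n with
  | zero => rfl
  | succ n ih => rw [Nat.mul_succ, wpow_add, ih, wpow_succ']

@[simp]
theorem length_wpow (x : List B) (n : ℕ) : (wpow x n).length = n * x.length := by
  induction n with
  | zero => simp [wpow]
  | succ n ih => simp [wpow, ih, Nat.succ_mul, Nat.add_comm]

theorem reverse_wpow (x : List B) (n : ℕ) : (wpow x n).reverse = wpow x.reverse n := by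
  induction n with
  | zero => rfl
  | succ n ih => rw [wpow_succ', List.reverse_append, ih]; rfl

theorem wpow_append_eq_append_wpow {x y u : List B} (h : x ++ u = u ++ y) (n : ℕ) :
    wpow x n ++ u = u ++ wpow y n := by
  induction n with
  | zero => simp [wpow]
  | succ n ih => rw [wpow, List.append_assoc, ih, ← List.append_assoc, h, List.append_assoc]; rfl

/-- Lyndon–Schützenberger. -/
theorem exists_wpow_of_append_comm {u w : List B} (h : u ++ w = w ++ u) :
    ∃ t m n, u = wpow t m ∧ w = wpow t n := by
  induction hN : u.length + w.length using Nat.strong_induction_on generalizing u w with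
  | _ N ih =>
  wlog hle : u.length ≤ w.length generalizing u w
  · obtain ⟨t, m, n, hw, hu⟩ := this h.symm (by omega) (by omega)
    exact ⟨t, n, m, hu, hw⟩
  rcases eq_or_ne u [] with rfl | hu
  · exact ⟨w, 0, 1, rfl, by simp [wpow]⟩
  obtain ⟨w', rfl⟩ : u <+: w := List.prefix_of_prefix_length_le (h ▸ List.prefix_append u w)
    (List.prefix_append w u) hle
  have hcomm : u ++ w' = w' ++ u := by simpa using h
  obtain ⟨t, m, n, rfl, rfl⟩ := ih _ (by simp [← hN, List.length_pos_iff.2 hu]) hcomm rfl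
  exact ⟨t, m, m + n, rfl, (wpow_add t m n).symm⟩

namespace Primitive

theorem reverse {v : List B} (hv : Primitive v) : Primitive v.reverse := by
  refine ⟨by simpa using hv.1, fun y p hp hy => hv.2 y.reverse p hp ?_⟩
  rw [← reverse_wpow, ← hy, List.reverse_reverse]

theorem eq_nil_or_eq_nil_of_append_comm {p s : List B} (hv : Primitive (p ++ s))
    (h : p ++ s = s ++ p) : p = [] ∨ s = [] := by
  obtain ⟨t, m, n, rfl, rfl⟩ := exists_wpow_of_append_comm h
  have hmn : m + n = 1 := hv.2 t (m + n)
    (Nat.pos_of_ne_zero fun h0 => hv.1 (by rw [← wpow_add, h0]; rfl)) (wpow_add t m n).symm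
  obtain rfl | rfl : m = 0 ∨ n = 0 := by omega
  exacts [.inl rfl, .inr rfl]

variable {v : List B}

/-- Strip leading copies of `v` from `r`; once `|r| < |v|`, the prefix `r v` of `v v` makes `r`
commute with the rest of `v`, so primitivity forces `r = []`. -/
theorem exists_eq_wpow_of_forall_prefix (hv : Primitive v) {r : List B}
    (h : ∀ i, wpow v i <+: r ++ wpow v i) : ∃ m, r = wpow v m := by
  have hv0 : 0 < v.length := List.length_pos_iff.2 hv.1
  induction hN : r.length using Nat.strong_induction_on generalizing r with
  | _ N ih =>
  rcases lt_or_ge r.length v.length with hlt | hle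
  · have hvv : r ++ v <+: v ++ v := List.prefix_of_prefix_length_le
      (List.prefix_append _ v) (by simpa [wpow] using h 2)
      (by simp only [List.length_append, add_le_add_iff_right]; omega)
    obtain ⟨s, rfl⟩ : r <+: v := List.prefix_of_prefix_length_le
      ((List.prefix_append r v).trans hvv) (List.prefix_append v v) hlt.le
    have hrs : r ++ s <+: s ++ r := List.prefix_of_prefix_length_le
      (by simpa using hvv) (List.prefix_append (s ++ r) s) (by simp [Nat.add_comm])
    rcases hv.eq_nil_or_eq_nil_of_append_comm (hrs.eq_of_length (by simp [Nat.add_comm]))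
      with rfl | rfl
    · exact ⟨0, rfl⟩
    · simp at hlt
  · obtain ⟨r', rfl⟩ : v <+: r := List.prefix_of_prefix_length_le
      (by simpa [wpow] using h 1) (List.prefix_append r v) hle
    have hr' : ∀ i, wpow v i <+: r' ++ wpow v i := by
      intro i
      have hi : wpow v i <+: r' ++ wpow v i ++ v := by
        simpa [wpow_succ'] using (show v ++ wpow v i <+: v ++ r' ++ wpow v (i + 1) from h (i + 1))
      exact List.prefix_of_prefix_length_le hi (List.prefix_append _ v) (by simp)
    obtain ⟨m, rfl⟩ := ih r'.length (by simp [← hN]; omega) hr' rfl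
    exact ⟨m + 1, rfl⟩

theorem exists_eq_append_wpow_of_forall_prefix (hv : Primitive v) {u x w : List B}
    (h : ∀ i, u ++ wpow v i <+: x ++ wpow v i ++ w) (hle : u.length ≤ x.length) :
    ∃ m, x = u ++ wpow v m := by
  obtain ⟨r, rfl⟩ : u <+: x :=
    List.prefix_of_prefix_length_le (by simpa [wpow] using h 0) (List.prefix_append x w) hle
  obtain ⟨m, rfl⟩ := hv.exists_eq_wpow_of_forall_prefix fun i =>
    List.prefix_of_prefix_length_le (by simpa using h i) (List.prefix_append _ w) (by simp)
  exact ⟨m, rfl⟩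

theorem exists_append_eq_append_wpow (hv : Primitive v) {s t u u' w : List B}
    (h : ∀ i j, u' ++ wpow v i <+: s ++ wpow t j ++ u ++ wpow v i ++ w) :
    ∃ e, t ++ u = u ++ wpow v e := by
  rcases eq_or_ne t [] with rfl | ht
  · exact ⟨0, by simp [wpow]⟩
  have hpow : ∀ j, u'.length ≤ j → ∃ m, s ++ wpow t j ++ u = u' ++ wpow v m := by
    intro j hj
    refine hv.exists_eq_append_wpow_of_forall_prefix (h · j) ?_
    have := Nat.le_mul_of_pos_right j (List.length_pos_iff.2 ht)
    simp only [List.append_assoc, List.length_append, length_wpow]; omega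
  obtain ⟨m, hm⟩ := hpow u'.length le_rfl
  obtain ⟨m', hm'⟩ := hpow (u'.length + 1) (by omega)
  have hmm' : m ≤ m' := by
    have hl := congrArg List.length hm
    have hl' := congrArg List.length hm'
    simp only [List.append_assoc, List.length_append, length_wpow, Nat.succ_mul] at hl hl'
    exact Nat.le_of_mul_le_mul_right (by omega) (List.length_pos_iff.2 hv.1)
  refine ⟨m' - m, List.append_cancel_left (as := s ++ wpow t u'.length) ?_⟩
  calc s ++ wpow t u'.length ++ (t ++ u) = s ++ wpow t (u'.length + 1) ++ u := by
        simp [wpow_succ']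
    _ = u' ++ wpow v m ++ wpow v (m' - m) := by
        rw [hm', List.append_assoc, ← wpow_add, Nat.add_sub_cancel' hmm']
    _ = s ++ wpow t u'.length ++ (u ++ wpow v (m' - m)) := by
        rw [← hm, List.append_assoc]

end Primitive

end Words

theorem comb_com_2_2_rev_general {B : Type*} (s1 u1 w1 u2 w2 y2 t1 x2 v : List B)
    (hv : Primitive v)
    (hlen : t1.length = x2.length)
    (h : ∀ i j : ℕ,
      s1 ++ wpow t1 j ++ u1 ++ wpow v i ++ w1 =
        u2 ++ wpow v i ++ w2 ++ wpow x2 j ++ y2) :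
    ∃ f1 f2 : List B × List B, ∀ i : ℕ, 1 ≤ i → ∀ j : ℕ, 1 ≤ j → ∃ k : ℕ,
      wpow t1 j ++ u1 ++ wpow v i = capp f1 (wpow v k) ∧
      wpow v i ++ w2 ++ wpow x2 j = capp f2 (wpow v k) := by
  obtain ⟨e, he⟩ := hv.exists_append_eq_append_wpow (s := s1) (u' := u2) (w := w1)
    fun i j => ⟨w2 ++ wpow x2 j ++ y2, by rw [h]; simp⟩
  obtain ⟨e', he'⟩ := hv.reverse.exists_append_eq_append_wpow (s := y2.reverse)
    (t := x2.reverse) (u := w2.reverse) (u' := w1.reverse) (w := u2.reverse)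
    fun i j => ⟨u1.reverse ++ wpow t1.reverse j ++ s1.reverse, by
      simpa [reverse_wpow] using congrArg List.reverse (h i j)⟩
  have hx2 : wpow v e' ++ w2 = w2 ++ x2 := by
    simpa [reverse_wpow] using congrArg List.reverse he'.symm
  obtain rfl : e' = e := by
    have hl := congrArg List.length he
    have hl' := congrArg List.length hx2
    simp only [List.length_append, length_wpow] at hl hl'
    exact Nat.eq_of_mul_eq_mul_right (List.length_pos_iff.2 hv.1) (by omega)
  refine ⟨(u1, []), ([], w2), fun i _ j _ => ⟨e' * j + i, ?_, ?_⟩⟩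
  · rw [capp, wpow_append_eq_append_wpow he, ← wpow_mul, wpow_add]; simp
  · rw [capp, List.append_assoc, ← wpow_append_eq_append_wpow hx2, ← wpow_mul,
      ← List.append_assoc, ← wpow_add, Nat.add_comm]; simp

theorem comb_com_2_2_rev {B : Type*} (s1 u1 w1 u2 w2 y2 t1 x2 v : List B)
    (ht1 : t1 ≠ []) (hx2 : x2 ≠ []) (hv : Primitive v)
    (hlen : t1.length = x2.length)
    (h : ∀ i j : ℕ,
      s1 ++ wpow t1 j ++ u1 ++ wpow v i ++ w1 =
        u2 ++ wpow v i ++ w2 ++ wpow x2 j ++ y2) :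
    ∃ f1 f2 : List B × List B, ∀ i : ℕ, 1 ≤ i → ∀ j : ℕ, 1 ≤ j → ∃ k : ℕ,
      wpow t1 j ++ u1 ++ wpow v i = capp f1 (wpow v k) ∧
      wpow v i ++ w2 ++ wpow x2 j = capp f2 (wpow v k) :=
  comb_com_2_2_rev_general s1 u1 w1 u2 w2 y2 t1 x2 v hv hlen h
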